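/- arXiv:2101.07276 — 3 statements merged into one kernel-verified Lean document; each statement's English description precedes it below -/
import Mathlib

section
/- Let A = σ^{α_1}_1 σ^{α_2}_2 ⋯ σ^{α_L}_L with α_k ∈ {0,x,y,z} (σ^0 denoting the identity), where 1 ≤ L ≤ N−2, and suppose at least one α_k ∈ {y,z}. Then |⟨g_1| A |g_2⟩| ≤ (L+1)²/N. -/
/-!
Pauli operators and their products act on the σ^x-basis as phased spin flips,
`(P f) t = c t * f (t ∆ m)` with `‖c t‖ ≤ 1`, the mask `m` marking the sites that carry a `σ^y`
or a `σ^z`; `Π^z` is the flip of all spins. For odd `N` the `N` kink configurations are distinct,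
so `|s_p⟩` has amplitude `N^{-1/2}` on each of them and vanishes elsewhere. Hence
`|⟨P s_p | Q s_q⟩| ≤ #{kinks κ | κ ∆ (m ∆ m') is a kink} / N`. For the four terms of
`⟨g₁|A|g₂⟩` the combined mask is `m_A` or its complement: constant outside the sites `1,…,L`
and not constant. Away from those sites a kink keeps its up-up bond (and then the mask would be
trivial) or acquires two adjacent down spins, so only the `L + 1` kinks at `0,…,L` contribute.
Finally `(|u₁| + |v₁|)(|u₂| + |v₂|) ≤ 2 ≤ L + 1`.
-/

open Complex BigOperators Finset

namespace SpinChain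

/-- Spin configurations on `N` sites (sites mod `N`): `true` = +1, `false` = −1. -/
abbrev Config (N : ℕ) := ZMod N → Bool

/-- The Hilbert space `H_N`: complex functions on spin configurations. -/
abbrev HS (N : ℕ) := Config N → ℂ

/-- The ±1 value of a spin. -/
def sgn (b : Bool) : ℂ := if b then 1 else -1

/-- Standard basis vector `e_s`. -/
def basis (N : ℕ) [NeZero N] (s : Config N) : HS N := fun t => if t = s then 1 else 0

/-- Inner product `⟨f|g⟩ = ∑_s conj (f s) * g s` (antilinear in the first argument). -/
noncomputable def braket (N : ℕ) [NeZero N] (f g : HS N) : ℂ :=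
  ∑ s, (starRingEnd ℂ) (f s) * g s

/-- Flip the spin at site `j`. -/
def flipAt (N : ℕ) (j : ZMod N) (s : Config N) : Config N :=
  Function.update s j (!(s j))

/-- Pauli operator σ^x_j : acts diagonally, `σ^x_j e_s = s(j) e_s`. -/
def sigmaX (N : ℕ) (j : ZMod N) : Module.End ℂ (HS N) where
  toFun f := fun s => sgn (s j) * f s
  map_add' f g := by funext s; simp [mul_add]
  map_smul' c f := by funext s; simp [smul_eq_mul]; ring

/-- Pauli operator σ^z_j : flips the spin at site `j`, `σ^z_j e_s = e_{s'}`. -/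
def sigmaZ (N : ℕ) (j : ZMod N) : Module.End ℂ (HS N) where
  toFun f := fun s => f (flipAt N j s)
  map_add' _ _ := rfl
  map_smul' _ _ := rfl

/-- Pauli operator σ^y_j = i σ^x_j σ^z_j. -/
noncomputable def sigmaY (N : ℕ) (j : ZMod N) : Module.End ℂ (HS N) :=
  Complex.I • (sigmaX N j * sigmaZ N j)

/-- Kinds of single-site operators: the identity and the three Pauli matrices. -/
inductive PKind | id | x | y | z
  deriving DecidableEq

/-- Single-site operator of a given kind at site `j`. -/
noncomputable def pauli (N : ℕ) : PKind → ZMod N → Module.End ℂ (HS N)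
  | PKind.id => fun _ => 1
  | PKind.x => sigmaX N
  | PKind.y => sigmaY N
  | PKind.z => sigmaZ N

/-- Parity operator Π^α = σ^α_1 σ^α_2 ⋯ σ^α_N. -/
noncomputable def parity (N : ℕ) (α : PKind) : Module.End ℂ (HS N) :=
  ((List.range N).map (fun j => pauli N α ((j + 1 : ℕ) : ZMod N))).prod

/-- The configuration of the kink state |j⟩: `s(j+r) = (−1)^{r+1}` for `r = 1,…,N`
(the single ferromagnetic bond is between sites `j` and `j+1`). -/
def kinkConfig (N : ℕ) (j : ZMod N) : Config N :=
  fun k => ((k - j).val == 0) || ((k - j).val % 2 == 1)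

/-- Kink state |j⟩. -/
def kink (N : ℕ) [NeZero N] (j : ZMod N) : HS N := basis N (kinkConfig N j)

/-- Momentum state `|s_p⟩ = N^{-1/2} ∑_{j=1}^N e^{i p j} |j⟩`. -/
noncomputable def momState (N : ℕ) [NeZero N] (p : ℝ) : HS N :=
  (Real.sqrt N : ℂ)⁻¹ • ∑ j ∈ Finset.range N,
    Complex.exp (Complex.I * p * ((j : ℂ) + 1)) • kink N ((j + 1 : ℕ) : ZMod N)

open scoped symmDiff

variable {N : ℕ}

def PKind.flips : PKind → Bool
  | .y => true
  | .z => true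
  | _ => false

theorem PKind.flips_iff {κ : PKind} : κ.flips ↔ κ = .y ∨ κ = .z := by
  cases κ <;> simp [PKind.flips]

def IsPhasedFlip (P : Module.End ℂ (HS N)) (m : Config N) : Prop :=
  ∃ c : Config N → ℂ, (∀ t, ‖c t‖ ≤ 1) ∧ ∀ f t, P f t = c t * f (t ∆ m)

namespace IsPhasedFlip

theorem one : IsPhasedFlip (1 : Module.End ℂ (HS N)) ⊥ :=
  ⟨1, fun _ => by simp, fun f t => by simp⟩

theorem mul {P Q : Module.End ℂ (HS N)} {m m' : Config N} (hP : IsPhasedFlip P m)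
    (hQ : IsPhasedFlip Q m') : IsPhasedFlip (P * Q) (m ∆ m') := by
  obtain ⟨c, hc, hPf⟩ := hP
  obtain ⟨c', hc', hQf⟩ := hQ
  refine ⟨fun t => c t * c' (t ∆ m), fun t => ?_, fun f t => ?_⟩
  · rw [norm_mul]
    exact mul_le_one₀ (hc t) (norm_nonneg _) (hc' _)
  · rw [Module.End.mul_apply, hPf, hQf, symmDiff_assoc, mul_assoc]

end IsPhasedFlip

theorem flipAt_eq_symmDiff (j : ZMod N) (s : Config N) :
    flipAt N j s = s ∆ fun k => decide (k = j) := by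
  funext k
  by_cases h : k = j <;> simp [flipAt, h, Bool.symmDiff_eq_xor]

theorem norm_sgn (b : Bool) : ‖sgn b‖ = 1 := by
  cases b <;> simp [sgn]

theorem isPhasedFlip_pauli (κ : PKind) (j : ZMod N) :
    IsPhasedFlip (pauli N κ j) fun k => decide (k = j) && κ.flips := by
  cases κ with
  | id =>
    convert IsPhasedFlip.one using 1
    · rfl
    · funext; simp [PKind.flips]
  | x => exact ⟨fun t => sgn (t j), fun t => (norm_sgn _).le, fun f t => by
      simp [pauli, sigmaX, PKind.flips, Pi.symmDiff_def, Bool.symmDiff_eq_xor]⟩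
  | y => exact ⟨fun t => I * sgn (t j), fun t => by simp [norm_sgn], fun f t => by
      simp [pauli, sigmaY, sigmaX, sigmaZ, flipAt_eq_symmDiff, mul_assoc, PKind.flips]⟩
  | z => exact ⟨1, fun t => by simp, fun f t => by
      simp [pauli, sigmaZ, flipAt_eq_symmDiff, PKind.flips]⟩

theorem isPhasedFlip_list_prod {ι : Type*} (l : List ι) (κ : ι → PKind) (site : ι → ZMod N)
    (hl : (l.map site).Nodup) :
    IsPhasedFlip ((l.map fun i => pauli N (κ i) (site i)).prod)
      fun k => decide (∃ i ∈ l, site i = k ∧ (κ i).flips) := by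
  induction l with
  | nil => convert IsPhasedFlip.one using 1; simp; rfl
  | cons i l ih =>
    rw [List.map_cons, List.nodup_cons, List.mem_map] at hl
    rw [List.map_cons, List.prod_cons]
    convert (isPhasedFlip_pauli (κ i) (site i)).mul (ih hl.2) using 1
    funext k
    by_cases hk : site i = k
    · subst hk
      have : ¬ ∃ j ∈ l, site j = site i ∧ (κ j).flips := fun ⟨j, hj, h, _⟩ => hl.1 ⟨j, hj, h⟩
      cases h : (κ i).flips <;> simp [Bool.symmDiff_eq_xor, this, h]
    · simp [Bool.symmDiff_eq_xor, hk, Ne.symm hk]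

theorem natCast_succ_injOn [NeZero N] :
    Set.InjOn (fun j : ℕ => ((j + 1 : ℕ) : ZMod N)) (Set.Iio N) := fun j hj j' hj' h => by
  have h' : (j : ZMod N) = j' := by simpa using h
  simpa [ZMod.val_cast_of_lt hj, ZMod.val_cast_of_lt hj'] using congrArg ZMod.val h'

theorem isPhasedFlip_parity_z [NeZero N] : IsPhasedFlip (parity N .z) ⊤ := by
  have hsites : ((List.range N).map fun j => ((j + 1 : ℕ) : ZMod N)).Nodup :=
    List.nodup_range.map_on fun j hj j' hj' =>
      natCast_succ_injOn (List.mem_range.1 hj) (List.mem_range.1 hj')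
  convert isPhasedFlip_list_prod (List.range N) (fun _ => .z) _ hsites using 1
  · rfl
  funext k
  simpa [PKind.flips] using ⟨(k - 1).val, ZMod.val_lt _, by simp⟩

def sites (N L : ℕ) : Finset (ZMod N) := (range L).image fun i => ((i + 1 : ℕ) : ZMod N)

noncomputable def pauliString (N : ℕ) {L : ℕ} (α : Fin L → PKind) : Module.End ℂ (HS N) :=
  ((List.finRange L).map fun k => pauli N (α k) (((k : ℕ) + 1 : ℕ) : ZMod N)).prod

def pauliStringMask (N : ℕ) {L : ℕ} (α : Fin L → PKind) : Config N :=
  fun k => decide (∃ i : Fin L, (((i : ℕ) + 1 : ℕ) : ZMod N) = k ∧ (α i).flips)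

theorem isPhasedFlip_pauliString [NeZero N] {L : ℕ} (hLN : L ≤ N) (α : Fin L → PKind) :
    IsPhasedFlip (pauliString N α) (pauliStringMask N α) := by
  have hsites : ((List.finRange L).map fun i : Fin L => (((i : ℕ) + 1 : ℕ) : ZMod N)).Nodup :=
    (List.nodup_finRange L).map_on fun i _ i' _ h =>
      Fin.ext (natCast_succ_injOn (by simp; omega) (by simp; omega) h)
  convert isPhasedFlip_list_prod _ α _ hsites using 1
  · rfl
  funext k
  simp [pauliStringMask]

theorem pauliStringMask_of_not_mem_sites {L : ℕ} (α : Fin L → PKind) {k : ZMod N}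
    (hk : k ∉ sites N L) : pauliStringMask N α k = false := by
  simp only [pauliStringMask, decide_eq_false_iff_not]
  rintro ⟨i, rfl, -⟩
  exact hk (mem_image.2 ⟨i, mem_range.2 i.2, rfl⟩)

theorem pauliStringMask_site {L : ℕ} {α : Fin L → PKind} {i : Fin L} (hi : (α i).flips) :
    pauliStringMask N α (((i : ℕ) + 1 : ℕ) : ZMod N) = true :=
  decide_eq_true ⟨i, rfl, hi⟩

theorem mem_image_range_of_mem_sites_or_add_one_mem {L : ℕ} {a : ZMod N}
    (h : a ∈ sites N L ∨ a + 1 ∈ sites N L) : a ∈ (range (L + 1)).image Nat.cast := by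
  simp only [sites, mem_image, mem_range] at h ⊢
  rcases h with ⟨i, hi, rfl⟩ | ⟨i, hi, hia⟩
  · exact ⟨i + 1, by omega, rfl⟩
  · exact ⟨i, by omega, by push_cast at hia; exact (add_right_cancel hia)⟩

theorem kinkConfig_eq_true_iff (j k : ZMod N) :
    kinkConfig N j k = true ↔ (k - j).val = 0 ∨ (k - j).val % 2 = 1 := by
  simp [kinkConfig]

theorem kinkConfig_self (j : ZMod N) : kinkConfig N j j = true := by
  simp [kinkConfig]

section Kinks

variable [NeZero N]

theorem val_add_one_sub (hN : 1 < N) (j k : ZMod N) :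
    (k + 1 - j).val = ((k - j).val + 1) % N := by
  rw [add_sub_right_comm, ZMod.val_add, ZMod.val_one_eq_one_mod, Nat.mod_eq_of_lt hN]

theorem kinkConfig_add_one_self (hN : 1 < N) (j : ZMod N) : kinkConfig N j (j + 1) = true := by
  rw [kinkConfig_eq_true_iff, val_add_one_sub hN, sub_self, ZMod.val_zero, zero_add,
    Nat.mod_eq_of_lt hN]
  omega

theorem eq_of_kinkConfig_eq_true (hodd : Odd N) (hN : 1 < N) {j k : ZMod N}
    (h₁ : kinkConfig N j k = true) (h₂ : kinkConfig N j (k + 1) = true) : k = j := by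
  rw [kinkConfig_eq_true_iff] at h₁ h₂
  rw [val_add_one_sub hN] at h₂
  have hlt := ZMod.val_lt (k - j)
  rcases h₁ with h₁ | h₁
  · exact sub_eq_zero.1 ((ZMod.val_eq_zero _).1 h₁)
  · obtain ⟨n, rfl⟩ := hodd
    rw [Nat.mod_eq_of_lt (by omega)] at h₂
    omega

theorem kinkConfig_or_kinkConfig_add_one (hN : 1 < N) (j k : ZMod N) :
    kinkConfig N j k = true ∨ kinkConfig N j (k + 1) = true := by
  simp only [kinkConfig_eq_true_iff, val_add_one_sub hN]
  have hlt := ZMod.val_lt (k - j)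
  rcases (show (k - j).val + 1 ≤ N by omega).lt_or_eq with h | h
  · rw [Nat.mod_eq_of_lt h]
    omega
  · rw [h, Nat.mod_self]
    omega

theorem kinkConfig_injective (hodd : Odd N) (hN : 1 < N) : Function.Injective (kinkConfig N) :=
  fun j j' h => eq_of_kinkConfig_eq_true hodd hN (j := j') (h ▸ kinkConfig_self j)
    (h ▸ kinkConfig_add_one_self hN j)

/-- If `a, a + 1 ∉ S`, then for `b = false` the flipped kink keeps the up-up bond at `a`, which
forces `a' = a` and `m = ⊥`; for `b = true` it has two adjacent down spins, which no kink has. -/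
theorem mem_or_add_one_mem_of_symmDiff_eq_kinkConfig (hodd : Odd N) (hN : 1 < N)
    {S : Finset (ZMod N)} {m : Config N} {b : Bool} {k₀ : ZMod N}
    (hoff : ∀ k ∉ S, m k = b) (hk₀ : m k₀ ≠ b) {a a' : ZMod N}
    (h : kinkConfig N a ∆ m = kinkConfig N a') : a ∈ S ∨ a + 1 ∈ S := by
  by_contra! ⟨ha, ha₁⟩
  have e : ∀ k, kinkConfig N a' k = xor (kinkConfig N a k) (m k) := fun k => by
    rw [← h, Pi.symmDiff_apply, Bool.symmDiff_eq_xor]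
  cases b
  · obtain rfl : a = a' := eq_of_kinkConfig_eq_true hodd hN
      (by simp [e, hoff a ha, kinkConfig_self])
      (by simp [e, hoff _ ha₁, kinkConfig_add_one_self hN])
    rw [symmDiff_eq_left] at h
    exact hk₀ (by simp [h])
  · rcases kinkConfig_or_kinkConfig_add_one hN a' a with h' | h' <;>
      simp [e, hoff a ha, hoff _ ha₁, kinkConfig_self, kinkConfig_add_one_self hN] at h'

end Kinks

section Brakets

variable [NeZero N]

theorem braket_add_left (f g h : HS N) : braket N (f + g) h = braket N f h + braket N g h := by
  simp [braket, add_mul, sum_add_distrib]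

theorem braket_smul_left (a : ℂ) (f g : HS N) :
    braket N (a • f) g = (starRingEnd ℂ) a * braket N f g := by
  simp [braket, mul_sum, mul_assoc]

theorem braket_add_right (f g h : HS N) : braket N f (g + h) = braket N f g + braket N f h := by
  simp [braket, mul_add, sum_add_distrib]

theorem braket_smul_right (a : ℂ) (f g : HS N) : braket N f (a • g) = a * braket N f g := by
  simp [braket, mul_sum, mul_left_comm]

theorem norm_braket_le_card_inter_mul {F G : Finset (Config N)} {f g : HS N} {r : ℝ}
    (hf : ∀ t, ‖f t‖ ≤ r) (hg : ∀ t, ‖g t‖ ≤ r) (hF : ∀ t ∉ F, f t = 0)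
    (hG : ∀ t ∉ G, g t = 0) : ‖braket N f g‖ ≤ #(F ∩ G) * r ^ 2 := by
  have hr : 0 ≤ r := (norm_nonneg _).trans (hf 0)
  calc ‖braket N f g‖ = ‖∑ t ∈ F ∩ G, (starRingEnd ℂ) (f t) * g t‖ := by
        rw [braket, ← sum_subset (subset_univ (F ∩ G))]
        intro t _ ht
        rcases not_and_or.1 (mt mem_inter.2 ht) with ht | ht <;> simp [hF, hG, ht]
    _ ≤ ∑ t ∈ F ∩ G, r ^ 2 := by
        refine (norm_sum_le _ _).trans (sum_le_sum fun t _ => ?_)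
        rw [norm_mul, RCLike.norm_conj, sq]
        exact mul_le_mul (hf t) (hg t) (norm_nonneg _) hr
    _ = #(F ∩ G) * r ^ 2 := by simp

end Brakets

namespace IsPhasedFlip

variable {P : Module.End ℂ (HS N)} {m : Config N}

theorem norm_apply_le (hP : IsPhasedFlip P m) {f : HS N} {r : ℝ} (hf : ∀ t, ‖f t‖ ≤ r)
    (t : Config N) : ‖P f t‖ ≤ r := by
  obtain ⟨c, hc, hPf⟩ := hP
  rw [hPf, norm_mul]
  exact (mul_le_of_le_one_left (norm_nonneg _) (hc t)).trans (hf _)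

theorem apply_eq_zero (hP : IsPhasedFlip P m) {f : HS N} {t : Config N} (ht : f (t ∆ m) = 0) :
    P f t = 0 := by
  obtain ⟨c, -, hPf⟩ := hP
  rw [hPf, ht, mul_zero]

end IsPhasedFlip

section MomentumStates

variable [NeZero N]

theorem momState_apply (p : ℝ) (t : Config N) :
    momState N p t = (Real.sqrt N : ℂ)⁻¹ * ∑ j ∈ range N,
      if t = kinkConfig N ((j + 1 : ℕ) : ZMod N) then exp (I * p * ((j : ℂ) + 1)) else 0 := by
  simp [momState, kink, basis]

theorem momState_apply_eq_zero (p : ℝ) {t : Config N} (ht : ∀ a, t ≠ kinkConfig N a) :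
    momState N p t = 0 := by
  simp [momState_apply, ht]

theorem norm_momState_apply_le (hodd : Odd N) (hN : 1 < N) (p : ℝ) (t : Config N) :
    ‖momState N p t‖ ≤ (Real.sqrt N)⁻¹ := by
  have hcard : #{j ∈ range N | t = kinkConfig N ((j + 1 : ℕ) : ZMod N)} ≤ 1 := by
    refine card_le_one.2 fun j hj j' hj' => ?_
    simp only [mem_filter, mem_range] at hj hj'
    exact natCast_succ_injOn hj.1 hj'.1 (kinkConfig_injective hodd hN (hj.2.symm.trans hj'.2))
  have hsum : ‖∑ j ∈ range N, if t = kinkConfig N ((j + 1 : ℕ) : ZMod N)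
      then exp (I * p * ((j : ℂ) + 1)) else 0‖ ≤ 1 := by
    refine (norm_sum_le _ _).trans ?_
    calc ∑ j ∈ range N, ‖if t = kinkConfig N ((j + 1 : ℕ) : ZMod N)
          then exp (I * p * ((j : ℂ) + 1)) else 0‖
        = ∑ j ∈ range N, if t = kinkConfig N ((j + 1 : ℕ) : ZMod N) then (1 : ℝ) else 0 := by
          refine sum_congr rfl fun j _ => ?_
          split_ifs
          · rw [show I * p * ((j : ℂ) + 1) = ((p * (j + 1) : ℝ) : ℂ) * I by push_cast; ring,
              norm_exp_ofReal_mul_I]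
          · exact norm_zero
      _ ≤ 1 := by exact_mod_cast (sum_boole _ _).trans_le hcard
  rw [momState_apply, norm_mul, norm_inv, Complex.norm_real, Real.norm_of_nonneg (by positivity)]
  exact mul_le_of_le_one_right (by positivity) hsum

end MomentumStates

theorem norm_braket_phasedFlip_momState_le [NeZero N] (hodd : Odd N) (hN : 1 < N) {L : ℕ}
    {P Q : Module.End ℂ (HS N)} {m m' : Config N} (hP : IsPhasedFlip P m)
    (hQ : IsPhasedFlip Q m') {b : Bool} {k₀ : ZMod N}
    (hoff : ∀ k ∉ sites N L, (m ∆ m') k = b) (hk₀ : (m ∆ m') k₀ ≠ b) (p q : ℝ) :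
    ‖braket N (P (momState N p)) (Q (momState N q))‖ ≤ (L + 1) / N := by
  set F := univ.image fun a => kinkConfig N a ∆ m
  set G := univ.image fun a => kinkConfig N a ∆ m'
  have hvanish : ∀ {R : Module.End ℂ (HS N)} {n : Config N}, IsPhasedFlip R n → ∀ r t,
      t ∉ univ.image (fun a => kinkConfig N a ∆ n) → R (momState N r) t = 0 :=
    fun hR r t ht => hR.apply_eq_zero <| momState_apply_eq_zero r fun a h =>
      ht (mem_image.2 ⟨a, mem_univ _, by rw [← h, symmDiff_symmDiff_cancel_right]⟩)
  have hFG : F ∩ G ⊆ (range (L + 1)).image fun i : ℕ => kinkConfig N i ∆ m := by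
    intro t ht
    obtain ⟨⟨a, -, rfl⟩, ⟨a', -, ha'⟩⟩ := And.imp mem_image.1 mem_image.1 (mem_inter.1 ht)
    have hkink : kinkConfig N a ∆ (m ∆ m') = kinkConfig N a' := by
      rw [← symmDiff_assoc, ← ha', symmDiff_symmDiff_cancel_right]
    obtain ⟨i, hi, rfl⟩ := mem_image.1 (mem_image_range_of_mem_sites_or_add_one_mem
      (mem_or_add_one_mem_of_symmDiff_eq_kinkConfig hodd hN hoff hk₀ hkink))
    exact mem_image.2 ⟨i, hi, rfl⟩
  have hcard : (#(F ∩ G) : ℝ) ≤ L + 1 := by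
    exact_mod_cast (card_le_card hFG).trans (card_image_le.trans (card_range _).le)
  calc ‖braket N (P (momState N p)) (Q (momState N q))‖
      ≤ #(F ∩ G) * (Real.sqrt N)⁻¹ ^ 2 :=
        norm_braket_le_card_inter_mul (hP.norm_apply_le (norm_momState_apply_le hodd hN p))
          (hQ.norm_apply_le (norm_momState_apply_le hodd hN q)) (hvanish hP p) (hvanish hQ q)
    _ ≤ (L + 1) / N := by
        rw [inv_pow, Real.sq_sqrt (Nat.cast_nonneg _), ← div_eq_mul_inv]
        gcongr

theorem norm_braket_momState_le_of_mask_eq [NeZero N] (hodd : Odd N) (hN : 1 < N) {L : ℕ}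
    {α : Fin L → PKind} {i : Fin L} (hi : (α i).flips) {P Q : Module.End ℂ (HS N)}
    {m m' : Config N} (hP : IsPhasedFlip P m) (hQ : IsPhasedFlip Q m')
    (h : m ∆ m' = pauliStringMask N α ∨ m ∆ m' = (pauliStringMask N α)ᶜ) (p q : ℝ) :
    ‖braket N (P (momState N p)) (Q (momState N q))‖ ≤ (L + 1) / N := by
  have hsite := pauliStringMask_site (N := N) hi
  rcases h with h | h
  · refine norm_braket_phasedFlip_momState_le hodd hN hP hQ (b := false)
      (fun k hk => by rw [h, pauliStringMask_of_not_mem_sites α hk])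
      (k₀ := (((i : ℕ) + 1 : ℕ) : ZMod N)) ?_ p q
    rw [h, hsite]
    decide
  · refine norm_braket_phasedFlip_momState_le hodd hN hP hQ (b := true)
      (fun k hk => by rw [h, Pi.compl_apply, pauliStringMask_of_not_mem_sites α hk]; rfl)
      (k₀ := (((i : ℕ) + 1 : ℕ) : ZMod N)) ?_ p q
    rw [h, Pi.compl_apply, hsite]
    decide

theorem norm_bilinear_expansion_le {x₁ y₁ x₂ y₂ a b c d : ℂ} {D : ℝ} (ha : ‖a‖ ≤ D)
    (hb : ‖b‖ ≤ D) (hc : ‖c‖ ≤ D) (hd : ‖d‖ ≤ D) (h₁ : ‖x₁‖ ^ 2 + ‖y₁‖ ^ 2 ≤ 1)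
    (h₂ : ‖x₂‖ ^ 2 + ‖y₂‖ ^ 2 ≤ 1) :
    ‖x₂ * (x₁ * a + y₁ * c) + y₂ * (x₁ * b + y₁ * d)‖ ≤ 2 * D := by
  have hD : 0 ≤ D := (norm_nonneg _).trans ha
  have hrow : ∀ e f : ℂ, ‖e‖ ≤ D → ‖f‖ ≤ D → ‖x₁ * e + y₁ * f‖ ≤ (‖x₁‖ + ‖y₁‖) * D :=
    fun e f he hf => (norm_add_le _ _).trans <| by
      rw [norm_mul, norm_mul, add_mul]
      gcongr
  calc _ ≤ ‖x₂‖ * ((‖x₁‖ + ‖y₁‖) * D) + ‖y₂‖ * ((‖x₁‖ + ‖y₁‖) * D) := by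
        refine (norm_add_le _ _).trans ?_
        rw [norm_mul, norm_mul]
        gcongr
        exacts [hrow a c ha hc, hrow b d hb hd]
    _ = ((‖x₁‖ + ‖y₁‖) * (‖x₂‖ + ‖y₂‖)) * D := by ring
    _ ≤ 2 * D := by
        gcongr
        nlinarith [norm_nonneg x₁, norm_nonneg y₁, norm_nonneg x₂, norm_nonneg y₂,
          sq_nonneg (‖x₁‖ - ‖y₁‖), sq_nonneg (‖x₂‖ - ‖y₂‖),
          sq_nonneg (‖x₁‖ + ‖y₁‖ - (‖x₂‖ + ‖y₂‖))]

theorem statement_1_general (N : ℕ) [NeZero N] (hN : Odd N)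
    (L : ℕ) (hL1 : 1 ≤ L) (hLN : L + 2 ≤ N)
    (α : Fin L → PKind) (hα : ∃ k, α k = PKind.y ∨ α k = PKind.z)
    (A : Module.End ℂ (HS N))
    (hA : A = ((List.finRange L).map
      (fun k => pauli N (α k) (((k : ℕ) + 1 : ℕ) : ZMod N))).prod)
    (p₁ p₂ : ℝ)
    (u₁ v₁ u₂ v₂ : ℂ)
    (hu₁ : ‖u₁‖ ^ 2 + ‖v₁‖ ^ 2 = 1)
    (hu₂ : ‖u₂‖ ^ 2 + ‖v₂‖ ^ 2 = 1)
    (g₁ g₂ : HS N)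
    (hg₁ : g₁ = u₁ • momState N p₁ + v₁ • parity N PKind.z (momState N p₁))
    (hg₂ : g₂ = u₂ • momState N p₂ + v₂ • parity N PKind.z (momState N p₂)) :
    ‖braket N g₁ (A g₂)‖ ≤ ((L : ℝ) + 1) ^ 2 / N := by
  have hN1 : 1 < N := by omega
  obtain ⟨k₀, hk₀⟩ := hα
  have hA' : IsPhasedFlip A (pauliStringMask N α) := hA ▸ isPhasedFlip_pauliString (by omega) α
  have hZ := isPhasedFlip_parity_z (N := N)
  have hterm := fun {P Q m m'} (hP : IsPhasedFlip P m) (hQ : IsPhasedFlip Q m') h =>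
    norm_braket_momState_le_of_mask_eq hN hN1 (PKind.flips_iff.2 hk₀) hP hQ h p₁ p₂
  rw [hg₁, hg₂, map_add, map_smul, map_smul]
  simp only [braket_add_left, braket_smul_left, braket_add_right, braket_smul_right]
  calc _ ≤ 2 * (((L : ℝ) + 1) / N) := norm_bilinear_expansion_le
        (hterm .one hA' (.inl (by simp))) (hterm .one (hA'.mul hZ) (.inr (by simp)))
        (hterm hZ hA' (.inr (by simp))) (hterm hZ (hA'.mul hZ) (.inl (by simp)))
        (by simpa using hu₁.le) hu₂.le
    _ ≤ ((L : ℝ) + 1) ^ 2 / N := by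
        rw [← mul_div_assoc, sq]
        gcongr
        exact_mod_cast Nat.succ_le_succ hL1

/-- For `A = σ^{α₁}_1 ⋯ σ^{α_L}_L` with at least one `α_k ∈ {y,z}`
and `1 ≤ L ≤ N−2`, one has `|⟨g₁|A|g₂⟩| ≤ (L+1)²/N`. -/
theorem statement_1 (N : ℕ) [NeZero N] (hN : Odd N)
    (L : ℕ) (hL1 : 1 ≤ L) (hLN : L + 2 ≤ N)
    (α : Fin L → PKind) (hα : ∃ k, α k = PKind.y ∨ α k = PKind.z)
    (A : Module.End ℂ (HS N))
    (hA : A = ((List.finRange L).map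
      (fun k => pauli N (α k) (((k : ℕ) + 1 : ℕ) : ZMod N))).prod)
    (k₁ k₂ : ℕ) (hk₁ : k₁ < N) (hk₂ : k₂ < N)
    (p₁ p₂ : ℝ) (hp₁ : p₁ = 2 * Real.pi * k₁ / N) (hp₂ : p₂ = 2 * Real.pi * k₂ / N)
    (u₁ v₁ u₂ v₂ : ℂ)
    (hu₁ : ‖u₁‖ ^ 2 + ‖v₁‖ ^ 2 = 1)
    (hu₂ : ‖u₂‖ ^ 2 + ‖v₂‖ ^ 2 = 1)
    (g₁ g₂ : HS N)
    (hg₁ : g₁ = u₁ • momState N p₁ + v₁ • parity N PKind.z (momState N p₁))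
    (hg₂ : g₂ = u₂ • momState N p₂ + v₂ • parity N PKind.z (momState N p₂)) :
    ‖braket N g₁ (A g₂)‖ ≤ ((L : ℝ) + 1) ^ 2 / N :=
  statement_1_general N hN L hL1 hLN α hα A hA p₁ p₂ u₁ v₁ u₂ v₂ hu₁ hu₂ g₁ g₂ hg₁ hg₂

end SpinChain
end

section
/- For every integer j one has cos(2πmj/N) ≥ −cos(πg/N), and there exists j ∈ {0,1,…,N−1} for which equality holds; i.e., the minimum of f(j) = cos(2πmj/N) over j ∈ {0,1,…,N−1} equals −cos(πg/N). -/
/-!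
Write `N = g n` and `m = g m'`, so that `n` is odd, `gcd m' n = 1` and the angles are
`2π k / n` with `k = m' j`. Replacing `k` by its balanced residue modulo `n` gives `|2k| ≤ n - 1`,
so the angle is within `π - π / n` of `0` modulo `2π` and its cosine is at least
`cos (π - π / n) = -cos (π / n)`. As `m'` is invertible modulo `n`, some `j` gives
`m' j ≡ (n - 1) / 2`, where the bound is attained.
-/

open Real

theorem cos_two_pi_mul_div_eq_of_modEq {n : ℕ} {a b : ℤ} (h : a ≡ b [ZMOD n]) :
    cos (2 * π * a / n) = cos (2 * π * b / n) := by
  rcases eq_or_ne n 0 with rfl | hn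
  · rw [Int.natCast_zero, Int.modEq_zero_iff] at h
    rw [h]
  obtain ⟨t, ht⟩ := Int.modEq_iff_dvd.mp h
  have hb : (b : ℝ) = a + n * t := by
    rw [← sub_eq_iff_eq_add']; exact_mod_cast ht
  rw [hb, show 2 * π * (a + n * t) / n = 2 * π * a / n + t * (2 * π) by field_simp,
    cos_add_int_mul_two_pi]

theorem neg_cos_pi_div_le_cos_two_pi_mul_div {n : ℕ} (hn : Odd n) (k : ℤ) :
    -cos (π / n) ≤ cos (2 * π * k / n) := by
  have hn0 : (0 : ℝ) < n := by exact_mod_cast hn.pos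
  set s := k.bmod n
  have hs : |2 * (s : ℝ)| ≤ n - 1 := by
    obtain ⟨r, hr⟩ := hn
    have h₁ := Int.le_bmod (x := k) (m := n) (by omega)
    have h₂ := Int.bmod_le (x := k) (m := n) (by omega)
    have : |2 * s| ≤ n - 1 := by
      rw [abs_le]; constructor <;> omega
    exact_mod_cast this
  rw [cos_two_pi_mul_div_eq_of_modEq (Int.bmod_emod (x := k) (m := n)).symm, ← cos_pi_sub,
    ← cos_abs (2 * π * s / n)]
  apply cos_le_cos_of_nonneg_of_le_pi (abs_nonneg _) (by linarith [pi_pos.le, div_pos pi_pos hn0])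
  rw [show 2 * π * s / n = π * (2 * s) / n by ring, abs_div, abs_mul, abs_of_pos pi_pos,
    abs_of_pos hn0, div_le_iff₀ hn0, sub_mul, div_mul_cancel₀ _ hn0.ne']
  nlinarith [pi_pos]

theorem cos_two_pi_mul_div_two_mul_add_one (k : ℕ) :
    cos (2 * π * k / (2 * k + 1)) = -cos (π / (2 * k + 1)) := by
  rw [← cos_pi_sub]
  congr 1
  field_simp
  ring

theorem exists_cos_two_pi_mul_div_eq_neg_cos {n m : ℕ} (hn : Odd n) (hmn : m.Coprime n) :
    ∃ j ∈ Finset.range n, cos (2 * π * m * j / n) = -cos (π / n) := by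
  obtain ⟨k, rfl⟩ := hn
  obtain ⟨y, hy⟩ := Int.mod_coprime hmn
  set r := y * k % (2 * k + 1 : ℕ)
  have hr₀ : 0 ≤ r := Int.emod_nonneg _ (by omega)
  have hr : r < (2 * k + 1 : ℕ) := Int.emod_lt_of_pos _ (by omega)
  have hmr : m * r ≡ k [ZMOD (2 * k + 1 : ℕ)] :=
    calc m * r ≡ m * y * k [ZMOD (2 * k + 1 : ℕ)] := by
          rw [mul_assoc]; exact (Int.mod_modEq _ _).mul_left _
      _ ≡ 1 * k [ZMOD (2 * k + 1 : ℕ)] := hy.mul_right _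
      _ = k := one_mul _
  refine ⟨r.toNat, Finset.mem_range.mpr (by omega), ?_⟩
  have hcos := cos_two_pi_mul_div_eq_of_modEq hmr
  have hcast : ((r.toNat : ℕ) : ℝ) = r := by exact_mod_cast Int.toNat_of_nonneg hr₀
  push_cast at hcos ⊢
  rw [hcast, mul_assoc, hcos, cos_two_pi_mul_div_two_mul_add_one]

theorem statement_13_general (N m : ℕ) (hN : Odd N)
    (g : ℕ) (hg : g = Nat.gcd N m) :
    (∀ j : ℤ, -Real.cos (Real.pi * g / N) ≤ Real.cos (2 * Real.pi * m * j / N)) ∧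
    (∃ j ∈ Finset.range N,
      Real.cos (2 * Real.pi * m * j / N) = -Real.cos (Real.pi * g / N)) := by
  have hg₀ : 0 < g := hg ▸ Nat.gcd_pos_of_pos_left m hN.pos
  obtain ⟨n, rfl⟩ : g ∣ N := hg ▸ Nat.gcd_dvd_left N m
  obtain ⟨m', rfl⟩ : g ∣ m := hg ▸ Nat.gcd_dvd_right _ m
  have hn : Odd n := (Nat.odd_mul.mp hN).2
  have hcop : m'.Coprime n := by
    rw [Nat.gcd_mul_left, eq_comm, Nat.mul_eq_left hg₀.ne'] at hg
    exact Nat.coprime_comm.mp hg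
  have hg₀' : (g : ℝ) ≠ 0 := by exact_mod_cast hg₀.ne'
  have hpi : π * g / (g * n : ℕ) = π / n := by push_cast; field_simp
  have hangle (x : ℝ) : 2 * π * (g * m' : ℕ) * x / (g * n : ℕ) = 2 * π * m' * x / n := by
    push_cast; field_simp
  refine ⟨fun j ↦ ?_, ?_⟩
  · rw [hpi, hangle, mul_assoc _ (m' : ℝ)]
    exact_mod_cast neg_cos_pi_div_le_cos_two_pi_mul_div hn (m' * j)
  · obtain ⟨j, hj, hcos⟩ := exists_cos_two_pi_mul_div_eq_neg_cos hn hcop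
    refine ⟨j, Finset.mem_range.mpr ?_, by rw [hpi, hangle, hcos]⟩
    exact (Finset.mem_range.mp hj).trans_le (Nat.le_mul_of_pos_left n hg₀)

/-- For `N` odd, `0 < m < N`, `g = gcd(N,m)`: for every integer `j`,
`cos(2πmj/N) ≥ −cos(πg/N)`, and equality is attained for some `j ∈ {0,…,N−1}`;
i.e. the minimum of `f(j) = cos(2πmj/N)` over `{0,…,N−1}` equals `−cos(πg/N)`. -/
theorem statement_13 (N m : ℕ) (hN : Odd N) (hN0 : 0 < N) (hm0 : 0 < m) (hmN : m < N)
    (g : ℕ) (hg : g = Nat.gcd N m) :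
    (∀ j : ℤ, -Real.cos (Real.pi * g / N) ≤ Real.cos (2 * Real.pi * m * j / N)) ∧
    (∃ j ∈ Finset.range N,
      Real.cos (2 * Real.pi * m * j / N) = -Real.cos (Real.pi * g / N)) :=
  statement_13_general N m hN g hg
end

section
/- Let N be an odd positive integer, n a nonnegative integer with n+2 < N, and define for k ∈ {0,1,…,N−1} the quasiparticle energy ε_k = 2·√(1 + λ² + 2λ·cos(2π(n+2)k/N)). If λ ∈ (0,1), then the set of k ∈ {0,…,N−1} at which ε_k attains its minimum over {0,…,N−1} has exactly 2·gcd(N, n+2) elements; if λ ∈ (−1,0), this set has exactly gcd(N, n+2) elements. -/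
namespace Statement18Aux

open Real Finset

lemma card_mod_aux (M d r : ℕ) (hr : r < M) :
    ((Finset.range (d*M)).filter (fun k => k % M = r)).card = d := by
  have hM : 0 < M := lt_of_le_of_lt (Nat.zero_le r) hr
  have himg : (Finset.range (d*M)).filter (fun k => k % M = r)
      = (Finset.range d).image (fun q => q*M + r) := by
    ext k
    simp only [Finset.mem_filter, Finset.mem_range, Finset.mem_image]
    constructor
    · rintro ⟨hk, hkr⟩
      refine ⟨k / M, (Nat.div_lt_iff_lt_mul hM).2 hk, ?_⟩
      have := Nat.div_add_mod k M
      rw [hkr, Nat.mul_comm] at this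
      omega
    · rintro ⟨q, hq, rfl⟩
      refine ⟨?_, ?_⟩
      · calc q*M + r < (q+1)*M := by rw [add_mul]; omega
          _ ≤ d*M := Nat.mul_le_mul_right M hq
      · rw [Nat.add_comm, Nat.add_mul_mod_self_right, Nat.mod_eq_of_lt hr]
  rw [himg, Finset.card_image_of_injective _
    (fun x y h => by
      have : x * M = y * M := by omega
      exact Nat.eq_of_mul_eq_mul_right hM this),
    Finset.card_range]

lemma zmod_cast_iff_mod (M : ℕ) [NeZero M] (c : ZMod M) (k : ℕ) :
    ((k : ZMod M) = c) ↔ k % M = c.val := by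
  constructor
  · intro h; rw [← h, ZMod.val_natCast]
  · intro h
    calc (k : ZMod M) = ((k % M : ℕ) : ZMod M) := (ZMod.natCast_mod k M).symm
      _ = ((c.val : ℕ) : ZMod M) := by rw [h]
      _ = c := ZMod.natCast_rightInverse c

lemma card_zmod_aux (M d : ℕ) [NeZero M] (c : ZMod M) :
    ((Finset.range (d*M)).filter (fun k : ℕ => ((k : ZMod M) = c))).card = d := by
  have : (Finset.range (d*M)).filter (fun k : ℕ => ((k : ZMod M) = c))
      = (Finset.range (d*M)).filter (fun k => k % M = c.val) :=
    Finset.filter_congr (fun k _ => by simp [zmod_cast_iff_mod])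
  rw [this]
  exact card_mod_aux M d c.val (ZMod.val_lt c)


lemma cos_eq_one_aux (M j : ℕ) (hj : j < M) :
    Real.cos (2*Real.pi*j/M) = 1 ↔ j = 0 := by
  have hM : (0:ℝ) < M := by
    have : 0 < M := lt_of_le_of_lt (Nat.zero_le j) hj
    exact_mod_cast this
  have hx0 : 0 ≤ 2*Real.pi*j/M := by positivity
  have hx2 : 2*Real.pi*j/M < 2*Real.pi := by
    rw [div_lt_iff₀ hM]
    have hjR : (j:ℝ) < M := by exact_mod_cast hj
    nlinarith [Real.pi_pos]
  rw [Real.cos_eq_one_iff_of_lt_of_lt (by linarith [Real.pi_pos]) hx2]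
  constructor
  · intro h
    by_contra hj0
    have hj1 : (1:ℝ) ≤ j := by
      have : 1 ≤ j := Nat.one_le_iff_ne_zero.2 hj0
      exact_mod_cast this
    have : (0:ℝ) < 2*Real.pi*j/M := by positivity
    linarith
  · rintro rfl; simp

lemma cos_min_aux (M : ℕ) (hModd : Odd M) (hM : 1 < M) (j : ℕ) (hj : j < M) :
    -Real.cos (Real.pi/M) ≤ Real.cos (2*Real.pi*j/M) ∧
    (Real.cos (2*Real.pi*j/M) = -Real.cos (Real.pi/M) ↔ (2*j+1 = M ∨ 2*j = M+1)) := by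
  have hMR : (0:ℝ) < M := by exact_mod_cast lt_trans Nat.zero_lt_one hM
  have hMne : (M:ℝ) ≠ 0 := ne_of_gt hMR
  have hjZ : (j:ℤ) < (M:ℤ) := by exact_mod_cast hj
  set i : ℤ := (M:ℤ) - 2*j with hi
  have hiodd : Odd i := by
    rcases hModd with ⟨m, hm⟩
    exact ⟨(m:ℤ) - j, by rw [hi, hm]; push_cast; ring⟩
  have hine : i ≠ 0 := by
    rintro h
    rcases hiodd with ⟨c, hc⟩
    omega
  have h1i : 1 ≤ |i| := Int.one_le_abs hine
  have hiM : |i| ≤ (M:ℤ) := by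
    rcases abs_cases i with ⟨h, _⟩ | ⟨h, _⟩ <;> omega
  have hkey : Real.pi - 2*Real.pi*j/M = Real.pi * i / M := by
    rw [hi]; push_cast; field_simp
  have habs : |Real.pi - 2*Real.pi*j/M| = Real.pi * (|i| : ℤ) / M := by
    rw [hkey, abs_div, abs_mul, abs_of_pos Real.pi_pos, abs_of_pos hMR]
    push_cast
    rfl
  have h1iR : (1:ℝ) ≤ ((|i| : ℤ) : ℝ) := by exact_mod_cast h1i
  have hiMR : ((|i| : ℤ) : ℝ) ≤ (M:ℝ) := by exact_mod_cast hiM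
  have hb1 : Real.pi/M ≤ |Real.pi - 2*Real.pi*j/M| := by
    rw [habs]
    calc Real.pi/M = Real.pi*1/M := by ring
      _ ≤ Real.pi * (|i| : ℤ) / M := by gcongr
  have hb2 : |Real.pi - 2*Real.pi*j/M| ≤ Real.pi := by
    rw [habs, div_le_iff₀ hMR]
    nlinarith [Real.pi_pos]
  have hcosval : Real.cos (2*Real.pi*j/M) = -Real.cos |Real.pi - 2*Real.pi*j/M| := by
    rw [Real.cos_abs, Real.cos_pi_sub, neg_neg]
  have hpiM0 : 0 ≤ Real.pi/M := by positivity
  have hmain : Real.cos |Real.pi - 2*Real.pi*j/M| ≤ Real.cos (Real.pi/M) :=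
    Real.cos_le_cos_of_nonneg_of_le_pi hpiM0 hb2 hb1
  refine ⟨by rw [hcosval]; linarith, ?_⟩
  constructor
  · intro h
    by_contra habs2
    push_neg at habs2
    have hab1 : |i| ≠ 1 := by
      rcases abs_cases i with ⟨hh, _⟩ | ⟨hh, _⟩ <;> omega
    have h2i : 2 ≤ |i| := by omega
    have h2iR : (2:ℝ) ≤ ((|i| : ℤ) : ℝ) := by exact_mod_cast h2i
    have hstrict : Real.pi/M < |Real.pi - 2*Real.pi*j/M| := by
      rw [habs]
      rw [div_lt_div_iff₀ hMR hMR]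
      have hlt : Real.pi < Real.pi * ((|i| : ℤ) : ℝ) := by nlinarith [Real.pi_pos]
      exact mul_lt_mul_of_pos_right hlt hMR
    have := Real.cos_lt_cos_of_nonneg_of_le_pi hpiM0 hb2 hstrict
    rw [hcosval] at h
    linarith
  · intro h
    have hab1 : |i| = 1 := by
      rcases abs_cases i with ⟨hh, _⟩ | ⟨hh, _⟩ <;> omega
    rw [hcosval, habs, hab1]
    norm_num

lemma energy_le_iff (lam c c' : ℝ) (hl : |lam| < 1) (hc : |c| ≤ 1) (hc' : |c'| ≤ 1) :
    2*Real.sqrt (1 + lam^2 + 2*lam*c) ≤ 2*Real.sqrt (1+lam^2+2*lam*c') ↔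
      lam*c ≤ lam*c' := by
  obtain ⟨hc1, hc2⟩ := abs_le.mp hc
  obtain ⟨hc1', hc2'⟩ := abs_le.mp hc'
  have h1 : 0 ≤ 1 + lam^2 + 2*lam*c := by nlinarith [sq_nonneg (lam + c)]
  have h2 : 0 ≤ 1 + lam^2 + 2*lam*c' := by nlinarith [sq_nonneg (lam + c')]
  constructor
  · intro h
    have h3 : Real.sqrt (1 + lam^2 + 2*lam*c) ≤ Real.sqrt (1+lam^2+2*lam*c') := by
      linarith
    have := (Real.sqrt_le_sqrt_iff h2).1 h3
    linarith
  · intro h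
    have : 1+lam^2+2*lam*c ≤ 1+lam^2+2*lam*c' := by linarith
    have := Real.sqrt_le_sqrt this
    linarith

end Statement18Aux

open Statement18Aux

open scoped Classical in
/-- For the quasiparticle energies
`ε_k = 2√(1 + λ² + 2λcos(2π(n+2)k/N))` of the `n`-cluster-Ising chain (`N` odd,
`n+2 < N`), the set of `k ∈ {0,…,N−1}` minimizing `ε_k` has exactly `2·gcd(N,n+2)`
elements if `λ ∈ (0,1)`, and exactly `gcd(N,n+2)` elements if `λ ∈ (−1,0)`. -/
theorem statement_18 (N n : ℕ) (hN : Odd N) (hN0 : 0 < N) (hn : n + 2 < N)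
    (lam : ℝ) (ε : ℕ → ℝ)
    (hε : ∀ k, ε k = 2 * Real.sqrt
      (1 + lam ^ 2 + 2 * lam * Real.cos (2 * Real.pi * (n + 2) * k / N))) :
    (lam ∈ Set.Ioo (0 : ℝ) 1 →
      ((Finset.range N).filter
          (fun k => ∀ k' ∈ Finset.range N, ε k ≤ ε k')).card = 2 * Nat.gcd N (n + 2)) ∧
    (lam ∈ Set.Ioo (-1 : ℝ) 0 →
      ((Finset.range N).filter
          (fun k => ∀ k' ∈ Finset.range N, ε k ≤ ε k')).card = Nat.gcd N (n + 2)) := by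
  set d := Nat.gcd N (n + 2) with hd
  set M := N / d with hMdef
  set a' := (n + 2) / d with ha'def
  have hd0 : 0 < d := Nat.gcd_pos_of_pos_left _ hN0
  have hdN : d ∣ N := Nat.gcd_dvd_left _ _
  have hda : d ∣ n + 2 := Nat.gcd_dvd_right _ _
  have hNdM : d * M = N := Nat.mul_div_cancel' hdN
  have haa' : d * a' = n + 2 := Nat.mul_div_cancel' hda
  have hcop : Nat.Coprime M a' := Nat.coprime_div_gcd_div_gcd hd0
  have hdle : d ≤ n + 2 := Nat.le_of_dvd (by omega) hda
  have hM1 : 1 < M := by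
    by_contra h
    interval_cases M <;> omega
  have hM0 : 0 < M := by omega
  have hMleN : M ≤ N := Nat.le_of_dvd hN0 (Nat.div_dvd_of_dvd hdN)
  have hModd : Odd M := by
    rcases Nat.even_or_odd M with he | ho
    · exfalso
      obtain ⟨t, ht⟩ := he
      obtain ⟨s, hs⟩ := hN
      have : N = d*t + d*t := by rw [← hNdM, ht]; ring
      omega
    · exact ho
  haveI : NeZero M := ⟨by omega⟩
  have hMR : (0:ℝ) < M := by exact_mod_cast hM0
  have hMne : (M:ℝ) ≠ 0 := ne_of_gt hMR
  have hNne : (N:ℝ) ≠ 0 := by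
    have : (0:ℝ) < N := by exact_mod_cast hN0
    exact ne_of_gt this
  set ck : ℕ → ℝ := fun k => Real.cos (2 * Real.pi * ((n:ℝ) + 2) * k / N) with hck
  -- reduction of the angle
  have hnatid : (n+2) * M = a' * N := by
    calc (n+2)*M = (d*a')*M := by rw [haa']
      _ = a' * (d*M) := by ring
      _ = a' * N := by rw [hNdM]
  have hcs : ∀ k, ck k = Real.cos (2*Real.pi*((a'*k % M : ℕ):ℝ)/M) := by
    intro k
    have hcast : ((n:ℝ)+2) * M = (a':ℝ) * N := by exact_mod_cast hnatid
    have e1 : 2*Real.pi*((n:ℝ)+2)*k/N = 2*Real.pi*((a'*k : ℕ):ℝ)/M := by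
      rw [div_eq_div_iff hNne hMne]
      push_cast
      linear_combination (2*Real.pi*(k:ℝ)) * hcast
    set r := a' * k % M with hrdef
    set q := a' * k / M with hqdef
    have hqm : M * q + r = a' * k := Nat.div_add_mod _ _
    have hcast2 : ((a'*k : ℕ):ℝ) = (r:ℝ) + (q:ℝ)*M := by
      rw [← hqm]; push_cast; ring
    have e2 : 2*Real.pi*((a'*k : ℕ):ℝ)/M
        = 2*Real.pi*(r:ℝ)/M + ((q : ℤ) : ℝ)*(2*Real.pi) := by
      rw [hcast2]
      push_cast
      field_simp
    have e0 : ck k = Real.cos (2*Real.pi*((a'*k:ℕ):ℝ)/M) := by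
      have h0 : ck k = Real.cos (2 * Real.pi * ((n:ℝ) + 2) * k / N) := rfl
      rw [h0, e1]
    rw [e0, e2, Real.cos_add_int_mul_two_pi]
  have hcb : ∀ k, |ck k| ≤ 1 := fun k => Real.abs_cos_le_one _
  have hεck : ∀ k, ε k = 2 * Real.sqrt (1 + lam ^ 2 + 2 * lam * ck k) := by
    intro k; rw [hε k]
  have hjlt : ∀ k, a'*k % M < M := fun k => Nat.mod_lt _ hM0
  -- unit structure
  have hu : IsUnit ((a' : ZMod M)) := (ZMod.isUnit_iff_coprime a' M).2 hcop.symm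
  have hinv : ((a':ZMod M))⁻¹ * (a':ZMod M) = 1 := by
    rw [mul_comm]; exact ZMod.mul_inv_of_unit _ hu
  have hcancel : ∀ (x y : ZMod M), ((a':ZMod M) * x = y ↔ x = ((a':ZMod M))⁻¹ * y) := by
    intro x y
    constructor
    · intro h; rw [← h, ← mul_assoc, hinv, one_mul]
    · intro h; rw [h, ← mul_assoc, ZMod.mul_inv_of_unit _ hu, one_mul]
  have hcount : ∀ c : ZMod M,
      ((Finset.range N).filter (fun k : ℕ => (((a'*k : ℕ) : ZMod M) = c))).card = d := by
    intro c
    have heq : (Finset.range N).filter (fun k : ℕ => (((a'*k : ℕ) : ZMod M) = c))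
        = (Finset.range N).filter (fun k : ℕ => ((k : ZMod M) = ((a':ZMod M))⁻¹ * c)) := by
      apply Finset.filter_congr
      intro k _
      have : ((a'*k : ℕ) : ZMod M) = (a' : ZMod M) * (k : ZMod M) := by push_cast; ring
      rw [this]
      simp [hcancel]
    rw [heq, ← hNdM]
    exact card_zmod_aux M d _
  constructor
  · -- 0 < lam < 1
    rintro ⟨hl0, hl1⟩
    have hlabs : |lam| < 1 := by rw [abs_lt]; constructor <;> linarith
    have hle : ∀ k k', (ε k ≤ ε k' ↔ lam * ck k ≤ lam * ck k') := by
      intro k k'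
      rw [hεck k, hεck k']
      exact energy_le_iff lam _ _ hlabs (hcb k) (hcb k')
    obtain ⟨m, hm⟩ := hModd
    have hmM : m < M := by omega
    have hm1M : m + 1 < M := by omega
    set c₁ : ZMod M := (m : ZMod M) with hc₁
    set c₂ : ZMod M := ((m+1 : ℕ) : ZMod M) with hc₂
    have hv₁ : c₁.val = m := ZMod.val_cast_of_lt hmM
    have hv₂ : c₂.val = m + 1 := ZMod.val_cast_of_lt hm1M
    have hc₁₂ : c₁ ≠ c₂ := by
      intro h
      have := congrArg ZMod.val h
      rw [hv₁, hv₂] at this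
      omega
    -- characterization of the minimum
    have hAineq : ∀ k, -Real.cos (Real.pi/M) ≤ ck k := by
      intro k
      rw [hcs k]
      exact (cos_min_aux M ⟨m, hm⟩ hM1 _ (hjlt k)).1
    have hAeq : ∀ k, (ck k = -Real.cos (Real.pi/M) ↔
        (((a'*k : ℕ) : ZMod M) = c₁ ∨ ((a'*k : ℕ) : ZMod M) = c₂)) := by
      intro k
      rw [hcs k, (cos_min_aux M ⟨m, hm⟩ hM1 _ (hjlt k)).2,
        zmod_cast_iff_mod M c₁, zmod_cast_iff_mod M c₂, hv₁, hv₂]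
      omega
    -- a witness achieving the minimum
    set k₀ : ℕ := (((a':ZMod M))⁻¹ * c₁).val with hk₀def
    have hk₀lt : k₀ < N := lt_of_lt_of_le (ZMod.val_lt _) hMleN
    have hk₀z : ((a'*k₀ : ℕ) : ZMod M) = c₁ := by
      have h1 : ((a'*k₀ : ℕ) : ZMod M) = (a' : ZMod M) * (k₀ : ZMod M) := by push_cast; ring
      have h2 : ((k₀ : ℕ) : ZMod M) = ((a':ZMod M))⁻¹ * c₁ := ZMod.natCast_rightInverse _
      rw [h1, h2, ← mul_assoc, ZMod.mul_inv_of_unit _ hu, one_mul]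
    have hck₀ : ck k₀ = -Real.cos (Real.pi/M) := (hAeq k₀).2 (Or.inl hk₀z)
    have hPiff : ∀ k ∈ Finset.range N,
        ((∀ k' ∈ Finset.range N, ε k ≤ ε k') ↔
          (((a'*k : ℕ) : ZMod M) = c₁ ∨ ((a'*k : ℕ) : ZMod M) = c₂)) := by
      intro k _
      constructor
      · intro hP
        have h1 := hP k₀ (Finset.mem_range.2 hk₀lt)
        rw [hle] at h1
        have h2 : ck k ≤ ck k₀ := le_of_mul_le_mul_left h1 hl0
        rw [hck₀] at h2
        exact (hAeq k).1 (le_antisymm h2 (hAineq k))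
      · intro h k' hk'
        rw [hle]
        have h2 : ck k = -Real.cos (Real.pi/M) := (hAeq k).2 h
        have h3 := hAineq k'
        have : ck k ≤ ck k' := by rw [h2]; exact h3
        exact mul_le_mul_of_nonneg_left this hl0.le
    rw [Finset.filter_congr hPiff, Finset.filter_or,
      Finset.card_union_of_disjoint]
    · rw [hcount c₁, hcount c₂, hd]; ring
    · rw [Finset.disjoint_left]
      intro k h1 h2
      rw [Finset.mem_filter] at h1 h2
      exact hc₁₂ (h1.2 ▸ h2.2)
  · -- -1 < lam < 0
    rintro ⟨hl0, hl1⟩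
    have hlabs : |lam| < 1 := by rw [abs_lt]; constructor <;> linarith
    have hle : ∀ k k', (ε k ≤ ε k' ↔ lam * ck k ≤ lam * ck k') := by
      intro k k'
      rw [hεck k, hεck k']
      exact energy_le_iff lam _ _ hlabs (hcb k) (hcb k')
    have hcone : ∀ k, (ck k = 1 ↔ M ∣ k) := by
      intro k
      rw [hcs k, cos_eq_one_aux M _ (hjlt k)]
      constructor
      · intro h
        have hMd : M ∣ a' * k := Nat.dvd_of_mod_eq_zero h
        exact hcop.dvd_of_dvd_mul_left hMd
      · intro h
        obtain ⟨t, rfl⟩ := h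
        have : a' * (M * t) = M * (a' * t) := by ring
        rw [this, Nat.mul_mod_right]
    have hck0 : ck 0 = 1 := by
      show Real.cos (2 * Real.pi * ((n:ℝ) + 2) * (0:ℕ) / N) = 1
      norm_num
    have hPiff2 : ∀ k ∈ Finset.range N,
        ((∀ k' ∈ Finset.range N, ε k ≤ ε k') ↔ k % M = 0) := by
      intro k _
      constructor
      · intro hP
        have h1 := hP 0 (Finset.mem_range.2 hN0)
        rw [hle, hck0, mul_one] at h1
        have h2 : 1 ≤ ck k := by nlinarith
        have h3 : ck k ≤ 1 := by
          show Real.cos _ ≤ 1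
          exact Real.cos_le_one _
        obtain ⟨t, rfl⟩ := (hcone k).1 (le_antisymm h3 h2)
        simp [Nat.mul_mod_right]
      · intro h k' hk'
        rw [hle]
        have h4 : ck k = 1 := (hcone k).2 (Nat.dvd_of_mod_eq_zero h)
        have h5 : ck k' ≤ 1 := by
          show Real.cos _ ≤ 1
          exact Real.cos_le_one _
        nlinarith
    rw [Finset.filter_congr hPiff2, ← hNdM]
    exact card_mod_aux M d 0 hM0
end
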